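/- arXiv:2501.05123 — 3 statements merged into one kernel-verified Lean document; each statement's English description precedes it below -/
import Mathlib

section
/- Let n ≥ 3, let D ⊆ {0,1,…,n−1} be nonempty, let k be an integer, and set D + k = {(d + k) mod n : d ∈ D}. Then the unidirectional oriented cycle C⃗_n is D-antimagic if and only if it is (D + k)-antimagic. -/
open scoped Classical

/-- There is a directed walk of length `k` from `u` to `v` in the digraph with arc relation `A`. -/
def WalkLen {V : Type*} (A : V → V → Prop) : ℕ → V → V → Prop
  | 0, u, v => u = v
  | k + 1, u, v => ∃ w, A u w ∧ WalkLen A k w v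

/-- The directed distance from `u` to `v` is exactly `k`
(i.e. `k` is the length of a shortest directed path from `u` to `v`). -/
def HasDist {V : Type*} (A : V → V → Prop) (u v : V) (k : ℕ) : Prop :=
  WalkLen A k u v ∧ ∀ m < k, ¬ WalkLen A m u v

/-- `y` belongs to the `D`-neighborhood of `v`: the distance from `v` to `y` lies in `D`. -/
def InDNbhd {V : Type*} (A : V → V → Prop) (D : Set ℕ) (v y : V) : Prop :=
  ∃ k ∈ D, HasDist A v y k

/-- The `D`-weight of `v` under the labeling `f`: the sum of labels of the `D`-neighbors. -/
noncomputable def dWeight {V : Type*} [Fintype V] (A : V → V → Prop) (D : Set ℕ)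
    (f : V → ℕ) (v : V) : ℕ :=
  ∑ y : V, if InDNbhd A D v y then f y else 0

/-- The digraph `(V, A)` is `D`-antimagic: some bijective labeling of the vertices by
`1, …, |V|` gives pairwise distinct `D`-weights. -/
def DAntimagic (V : Type*) [Fintype V] (A : V → V → Prop) (D : Set ℕ) : Prop :=
  ∃ f : V ≃ Fin (Fintype.card V),
    Function.Injective fun v => dWeight A D (fun y => (f y : ℕ) + 1) v

/-- The orientation of the cycle `C_n` determined by `σ`: the edge between vertex `i` and
vertex `(i+1) mod n` is directed `i → i+1` when `σ i = true`, and `i+1 → i` otherwise. -/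
def cycleArc (n : ℕ) (σ : Fin n → Bool) (u v : Fin n) : Prop :=
  (σ u = true ∧ (v : ℕ) = ((u : ℕ) + 1) % n) ∨
  (σ v = false ∧ (u : ℕ) = ((v : ℕ) + 1) % n)

/-- The arc relation of the unidirectional oriented cycle `C⃗_n`: arcs `i → (i+1) mod n`. -/
def uniArc (n : ℕ) (u v : Fin n) : Prop :=
  (v : ℕ) = ((u : ℕ) + 1) % n

/-- An orientation of `C_n` is unidirectional if all edges are directed the same way around. -/
def Unidirectional (n : ℕ) (σ : Fin n → Bool) : Prop :=
  (∀ i, σ i = true) ∨ (∀ i, σ i = false)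

/-- A sink: a vertex of out-degree 0. -/
def IsSink {V : Type*} (A : V → V → Prop) (u : V) : Prop :=
  ∀ v, ¬ A u v

/-- A source: a vertex of in-degree 0. -/
def IsSource {V : Type*} (A : V → V → Prop) (u : V) : Prop :=
  ∀ v, ¬ A v u

/-- A digraph is Θ-oriented if it has exactly one sink and exactly one source, and
they are adjacent (so the arc between them goes from the source to the sink). -/
def ThetaOriented {V : Type*} (A : V → V → Prop) : Prop :=
  ∃ s t, IsSink A s ∧ IsSource A t ∧ (∀ u, IsSink A u → u = s) ∧
    (∀ u, IsSource A u → u = t) ∧ A t s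

/-- The arc relation of the Θ-oriented cycle on `Fin n`:
arcs `i → i+1` for `0 ≤ i ≤ n-2`, together with the arc `0 → n-1`. -/
def thetaArc (n : ℕ) (u v : Fin n) : Prop :=
  ((v : ℕ) = (u : ℕ) + 1) ∨ ((u : ℕ) = 0 ∧ (v : ℕ) = n - 1)

/-- The arc relation of a disjoint union of `c` oriented cycles, the `j`-th component having
`len j` vertices and arc relation `A j`. -/
def unionArc (c : ℕ) (len : Fin c → ℕ)
    (A : ∀ j, Fin (len j) → Fin (len j) → Prop)
    (u v : Σ j, Fin (len j)) : Prop :=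
  ∃ h : u.1 = v.1, A v.1 (Fin.cast (congrArg len h) u.2) v.2

open Fin.NatCast Fin.CommRing

lemma uniArc_iff (n : ℕ) [NeZero n] (u w : Fin n) : uniArc n u w ↔ w = u + 1 := by
  have h : ((u:ℕ) + 1) % n = ((u:ℕ) + 1 % n) % n := by
    conv_lhs => rw [Nat.add_mod]
    rw [Nat.mod_eq_of_lt u.isLt]
  unfold uniArc
  rw [Fin.ext_iff, Fin.add_def, Fin.val_one', h]

lemma walk_iff (n : ℕ) [NeZero n] (m : ℕ) (u v : Fin n) :
    WalkLen (uniArc n) m u v ↔ v = u + (m : Fin n) := by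
  induction m generalizing u with
  | zero => simp [WalkLen, eq_comm]
  | succ m ih =>
    show (∃ w, uniArc n u w ∧ WalkLen (uniArc n) m w v) ↔ _
    constructor
    · rintro ⟨w, hw, hwalk⟩
      rw [uniArc_iff] at hw
      rw [(ih w).1 hwalk, hw]
      push_cast
      ring
    · intro h
      refine ⟨u + 1, (uniArc_iff n u _).2 rfl, (ih _).2 ?_⟩
      rw [h]; push_cast; ring

lemma hasdist_iff (n : ℕ) [NeZero n] (u v : Fin n) (m : ℕ) :
    HasDist (uniArc n) u v m ↔ m = ((v - u : Fin n) : ℕ) := by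
  have hw : ∀ j : ℕ, WalkLen (uniArc n) j u v ↔ (j : Fin n) = v - u := by
    intro j; rw [walk_iff]
    constructor
    · intro h; rw [h]; ring
    · intro h; rw [h]; ring
  constructor
  · rintro ⟨h1, h2⟩
    have hm : (m : Fin n) = v - u := (hw m).1 h1
    have hwd : WalkLen (uniArc n) ((v - u : Fin n) : ℕ) u v :=
      (hw _).2 (Fin.cast_val_eq_self _)
    have hge : ¬ ((v - u : Fin n) : ℕ) < m := fun hlt => h2 _ hlt hwd
    have h1' : m % n = ((v - u : Fin n) : ℕ) := by
      conv_lhs => rw [← Fin.val_natCast (a := m) (n := n)]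
      rw [hm]
    have hle : m ≤ ((v - u : Fin n) : ℕ) := not_lt.1 hge
    have hmn : m < n := lt_of_le_of_lt hle (v - u).isLt
    rw [← h1', Nat.mod_eq_of_lt hmn]
  · intro h
    subst h
    refine ⟨(hw _).2 (Fin.cast_val_eq_self _), fun j hj hwalk => ?_⟩
    have hj' : (j : Fin n) = v - u := (hw j).1 hwalk
    have h1' : j % n = ((v - u : Fin n) : ℕ) := by
      conv_lhs => rw [← Fin.val_natCast (a := j) (n := n)]
      rw [hj']
    have := Nat.mod_le j n
    omega

lemma inDNbhd_iff (n : ℕ) [NeZero n] (D : Set ℕ) (v y : Fin n) :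
    InDNbhd (uniArc n) D v y ↔ ((y - v : Fin n) : ℕ) ∈ D := by
  unfold InDNbhd
  constructor
  · rintro ⟨k, hk, hd⟩; rwa [(hasdist_iff n v y k).1 hd] at hk
  · intro h; exact ⟨_, h, (hasdist_iff n v y _).2 rfl⟩

lemma val_cong (n : ℕ) [NeZero n] (a b : Fin n) :
    ((a + b : Fin n) : ℤ) ≡ (a : ℤ) + (b : ℤ) [ZMOD n] := by
  show _ % _ = _ % _
  rw [Fin.val_add]
  push_cast
  exact Int.emod_emod_of_dvd _ dvd_rfl

lemma key_iff (n : ℕ) [NeZero n] (D : Set ℕ) (hsub : ∀ d ∈ D, d < n) (k : ℤ) (κ : Fin n)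
    (hκ : (κ : ℤ) ≡ k [ZMOD n]) (y v : Fin n) :
    (((y - v : Fin n) : ℕ) ∈ {m : ℕ | ∃ d ∈ D, (m : ℤ) = ((d:ℤ) + k) % (n:ℤ)}) ↔
      ((y - κ - v : Fin n) : ℕ) ∈ D := by
  have h0 : (0:ℤ) < n := by exact_mod_cast Nat.pos_of_ne_zero (NeZero.ne n)
  have hcong : ((y - v : Fin n) : ℤ) ≡ ((y - κ - v : Fin n) : ℤ) + k [ZMOD n] := by
    have h1 : (y - κ - v) + κ = y - v := by ring
    calc ((y - v : Fin n):ℤ) = (((y - κ - v) + κ : Fin n):ℤ) := by rw [h1]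
    _ ≡ ((y - κ - v : Fin n):ℤ) + (κ:ℤ) [ZMOD n] := val_cong n _ _
    _ ≡ ((y - κ - v : Fin n):ℤ) + k [ZMOD n] := Int.ModEq.add_left _ hκ
  have hm1 : ((y - v : Fin n) : ℕ) < n := (y - v).isLt
  have hm2 : ((y - κ - v : Fin n) : ℕ) < n := (y - κ - v).isLt
  set m1 := ((y - v : Fin n) : ℕ) with hm1def
  set m2 := ((y - κ - v : Fin n) : ℕ) with hm2def
  have hm1' : (m1:ℤ) % n = m1 :=
    Int.emod_eq_of_lt (by positivity) (by exact_mod_cast hm1)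
  constructor
  · rintro ⟨d, hd, heq⟩
    have h1 : ((d:ℤ) + k) ≡ (m1:ℤ) [ZMOD n] := by
      show _ % _ = _ % _
      rw [heq, Int.emod_emod_of_dvd _ dvd_rfl]
    have h2 : (d : ℤ) + k ≡ (m2:ℤ) + k [ZMOD n] := h1.trans hcong
    have h3 : (d : ℤ) ≡ (m2:ℤ) [ZMOD n] := by
      have := h2.add_right (-k); simpa using this
    have hd' : (d:ℤ) % n = (d:ℤ) :=
      Int.emod_eq_of_lt (by positivity) (by exact_mod_cast hsub d hd)
    have hm2' : (m2:ℤ) % n = m2 := Int.emod_eq_of_lt (by positivity) (by exact_mod_cast hm2)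
    have h4 : (d:ℤ) % n = (m2:ℤ) % n := h3
    have : d = m2 := by omega
    rwa [← this]
  · intro h
    refine ⟨m2, h, ?_⟩
    conv_lhs => rw [← hm1']
    exact hcong

lemma weight_shift (n : ℕ) [NeZero n] (D D' : Set ℕ) (κ : Fin n)
    (hDD' : ∀ y v : Fin n, (((y - v : Fin n):ℕ) ∈ D') ↔ ((y - κ - v : Fin n):ℕ) ∈ D)
    (f : Fin n → ℕ) (v : Fin n) :
    dWeight (uniArc n) D' f v = dWeight (uniArc n) D (fun z => f (z + κ)) v := by
  unfold dWeight
  rw [← Equiv.sum_comp (Equiv.addRight κ)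
    (fun y => if InDNbhd (uniArc n) D' v y then f y else 0)]
  apply Finset.sum_congr rfl
  intro z _
  have h : InDNbhd (uniArc n) D' v (z + κ) ↔ InDNbhd (uniArc n) D v z := by
    rw [inDNbhd_iff, inDNbhd_iff, hDD' (z + κ) v, add_sub_cancel_right]
  simp only [Equiv.coe_addRight, h]

/-- For `n ≥ 3`, a nonempty `D ⊆ {0, …, n-1}` and an integer `k`, the
unidirectional `C⃗_n` is `D`-antimagic iff it is `(D + k)`-antimagic, where
`D + k = {(d + k) mod n : d ∈ D}`. -/
theorem uni_antimagic_iff_shift_antimagic (n : ℕ) (hn : 3 ≤ n) (D : Set ℕ)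
    (hD : D.Nonempty) (hsub : D ⊆ {m : ℕ | m < n}) (k : ℤ) :
    DAntimagic (Fin n) (uniArc n) D ↔
      DAntimagic (Fin n) (uniArc n)
        {m : ℕ | ∃ d ∈ D, (m : ℤ) = ((d : ℤ) + k) % (n : ℤ)} := by
  haveI : NeZero n := ⟨by omega⟩
  have h0 : (0:ℤ) < n := by exact_mod_cast (by omega : 0 < n)
  set κ : Fin n := (((k % (n:ℤ)).toNat : ℕ) : Fin n) with hκdef
  have hlt : (k % (n:ℤ)).toNat < n := by
    have h1 := Int.emod_lt_of_pos k h0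
    have h2 := Int.emod_nonneg k (ne_of_gt h0)
    omega
  have hval : (κ : ℕ) = (k % (n:ℤ)).toNat := by
    rw [hκdef, Fin.val_natCast, Nat.mod_eq_of_lt hlt]
  have hκ : (κ : ℤ) ≡ k [ZMOD n] := by
    show _ % _ = _ % _
    rw [hval, Int.toNat_of_nonneg (Int.emod_nonneg k (ne_of_gt h0))]
    exact Int.emod_emod_of_dvd _ dvd_rfl
  have hDD' := key_iff n D (fun d hd => hsub hd) k κ hκ
  constructor
  · rintro ⟨f, hf⟩
    refine ⟨(Equiv.subRight κ).trans f, ?_⟩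
    have heq : (fun v => dWeight (uniArc n)
          {m : ℕ | ∃ d ∈ D, (m : ℤ) = ((d : ℤ) + k) % (n : ℤ)}
          (fun y => (((Equiv.subRight κ).trans f) y : ℕ) + 1) v)
        = fun v => dWeight (uniArc n) D (fun y => (f y : ℕ) + 1) v := by
      funext v
      rw [weight_shift n D _ κ hDD']
      congr 1
      funext z
      simp [add_sub_cancel_right]
    rw [heq]; exact hf
  · rintro ⟨f, hf⟩
    refine ⟨(Equiv.addRight κ).trans f, ?_⟩
    have heq : (fun v => dWeight (uniArc n) D
          (fun y => (((Equiv.addRight κ).trans f) y : ℕ) + 1) v)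
        = fun v => dWeight (uniArc n)
          {m : ℕ | ∃ d ∈ D, (m : ℤ) = ((d : ℤ) + k) % (n : ℤ)}
          (fun y => (f y : ℕ) + 1) v := by
      funext v
      rw [weight_shift n D _ κ hDD' (fun y => (f y : ℕ) + 1) v]
      rfl
    rw [heq]; exact hf
end

section
/- For n ≥ 3, an oriented cycle C⃗_n is {1}-antimagic if and only if it is unidirectional or Θ-oriented. -/
open scoped Classical

lemma inD1 {V : Type*} (A : V → V → Prop) (v y : V) :
    InDNbhd A {1} v y ↔ A v y ∧ v ≠ y := by
  constructor
  · rintro ⟨k, hk, h1, h2⟩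
    simp only [Set.mem_singleton_iff] at hk
    subst hk
    simp only [WalkLen] at h1
    obtain ⟨w, hw, hwy⟩ := h1
    subst hwy
    refine ⟨hw, fun h => h2 0 one_pos ?_⟩
    simpa [WalkLen] using h
  · rintro ⟨h, hne⟩
    refine ⟨1, rfl, ⟨y, h, rfl⟩, fun m hm => ?_⟩
    interval_cases m
    simpa [WalkLen] using hne

section CycleLemmas
variable {n : ℕ} [NeZero n]

lemma val1 (hn : 3 ≤ n) : ((1 : Fin n) : ℕ) = 1 := by
  rw [Fin.val_one']; exact Nat.mod_eq_of_lt (by omega)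

lemma val_succ (hn : 3 ≤ n) (u : Fin n) : ((u + 1 : Fin n) : ℕ) = ((u : ℕ) + 1) % n := by
  rw [Fin.add_def, val1 hn]

lemma val_pred (hn : 3 ≤ n) (u : Fin n) : ((u - 1 : Fin n) : ℕ) = ((u : ℕ) + (n - 1)) % n := by
  rw [Fin.sub_def, val1 hn, Nat.add_comm]

lemma val_succ_iff (hn : 3 ≤ n) (u v : Fin n) :
    (v : ℕ) = ((u : ℕ) + 1) % n ↔ v = u + 1 := by
  rw [Fin.ext_iff (a := v) (b := u + 1), val_succ hn]

lemma fin_succ_ne (hn : 3 ≤ n) (v : Fin n) : v + 1 ≠ v := by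
  intro h
  have := congrArg Fin.val h
  rw [val_succ hn] at this
  have hv := v.isLt
  rcases Nat.lt_or_ge ((v : ℕ) + 1) n with h' | h'
  · rw [Nat.mod_eq_of_lt h'] at this; omega
  · have : ((v:ℕ) + 1) % n = 0 := by
      have : (v:ℕ) + 1 = n := by omega
      simp [this]
    omega

lemma fin_pred_ne (hn : 3 ≤ n) (v : Fin n) : v - 1 ≠ v := by
  intro h
  have : v - 1 + 1 = v + 1 := by rw [h]
  rw [sub_add_cancel] at this
  exact fin_succ_ne hn v this.symm

lemma fin_succ_ne_pred (hn : 3 ≤ n) (v : Fin n) : v + 1 ≠ v - 1 := by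
  intro h
  have := congrArg Fin.val h
  rw [val_succ hn, val_pred hn] at this
  have hv := v.isLt
  rcases Nat.lt_or_ge ((v : ℕ) + 1) n with h' | h'
  · rw [Nat.mod_eq_of_lt h'] at this
    rcases Nat.lt_or_ge ((v : ℕ) + (n-1)) n with h'' | h''
    · rw [Nat.mod_eq_of_lt h''] at this; omega
    · have h3 : (v:ℕ) + (n-1) - n < n := by omega
      rw [Nat.mod_eq_sub_mod h'', Nat.mod_eq_of_lt h3] at this; omega
  · have hv1 : (v:ℕ) + 1 = n := by omega
    have h2 : ((v:ℕ) + 1) % n = 0 := by simp [hv1]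
    have h4 : (v:ℕ) + (n-1) - n < n := by omega
    have h3 : ((v:ℕ) + (n-1)) % n = (v:ℕ) - 1 := by
      rw [Nat.mod_eq_sub_mod (by omega), Nat.mod_eq_of_lt h4]; omega
    omega

lemma eq_succ_iff (u v : Fin n) : v = u + 1 ↔ u = v - 1 := by
  constructor
  · intro h; rw [h, add_sub_cancel_right]
  · intro h; rw [h, sub_add_cancel]

lemma arc_iff (hn : 3 ≤ n) (σ : Fin n → Bool) (v y : Fin n) :
    cycleArc n σ v y ↔ (σ v = true ∧ y = v + 1) ∨ (σ (v - 1) = false ∧ y = v - 1) := by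
  unfold cycleArc
  rw [val_succ_iff hn v y, val_succ_iff hn y v]
  constructor
  · rintro (⟨h1, h2⟩ | ⟨h1, h2⟩)
    · exact Or.inl ⟨h1, h2⟩
    · rw [eq_succ_iff] at h2
      subst h2
      exact Or.inr ⟨h1, rfl⟩
  · rintro (⟨h1, h2⟩ | ⟨h1, h2⟩)
    · exact Or.inl ⟨h1, h2⟩
    · subst h2
      exact Or.inr ⟨h1, (eq_succ_iff _ _).2 rfl⟩

lemma inD_succ (hn : 3 ≤ n) (σ : Fin n → Bool) (v : Fin n) :
    InDNbhd (cycleArc n σ) {1} v (v + 1) ↔ σ v = true := by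
  rw [inD1, arc_iff hn]
  constructor
  · rintro ⟨h | h, _⟩
    · exact h.1
    · exact absurd h.2 (fin_succ_ne_pred hn v)
  · intro h
    exact ⟨Or.inl ⟨h, rfl⟩, (fin_succ_ne hn v).symm⟩

lemma inD_pred (hn : 3 ≤ n) (σ : Fin n → Bool) (v : Fin n) :
    InDNbhd (cycleArc n σ) {1} v (v - 1) ↔ σ (v - 1) = false := by
  rw [inD1, arc_iff hn]
  constructor
  · rintro ⟨h | h, _⟩
    · exact absurd h.2.symm (fin_succ_ne_pred hn v)
    · exact h.1
  · intro h
    exact ⟨Or.inr ⟨h, rfl⟩, (fin_pred_ne hn v).symm⟩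

lemma weight_eq (hn : 3 ≤ n) (σ : Fin n → Bool) (f : Fin n → ℕ) (v : Fin n) :
    dWeight (cycleArc n σ) {1} f v =
      (if σ v then f (v + 1) else 0) + (if σ (v - 1) then 0 else f (v - 1)) := by
  unfold dWeight
  have hsub : ({v + 1, v - 1} : Finset (Fin n)) ⊆ Finset.univ := Finset.subset_univ _
  rw [← Finset.sum_subset hsub]
  · rw [Finset.sum_pair (fin_succ_ne_pred hn v)]
    rw [if_congr (inD_succ hn σ v) rfl rfl, if_congr (inD_pred hn σ v) rfl rfl]
    cases hσ : σ v <;> cases hσ' : σ (v - 1) <;> simp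
  · intro y _ hy
    simp only [Finset.mem_insert, Finset.mem_singleton, not_or] at hy
    rw [if_neg]
    intro hin
    rw [inD1] at hin
    rcases (arc_iff hn σ v y).1 hin.1 with ⟨_, h⟩ | ⟨_, h⟩
    · exact hy.1 h
    · exact hy.2 h

lemma isSink_iff (hn : 3 ≤ n) (σ : Fin n → Bool) (v : Fin n) :
    IsSink (cycleArc n σ) v ↔ (σ v = false ∧ σ (v - 1) = true) := by
  constructor
  · intro h
    constructor
    · by_contra hc
      exact h (v + 1) ((arc_iff hn σ v (v+1)).2 (Or.inl ⟨by simpa using hc, rfl⟩))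
    · by_contra hc
      exact h (v - 1) ((arc_iff hn σ v (v-1)).2 (Or.inr ⟨by simpa using hc, rfl⟩))
  · rintro ⟨h1, h2⟩ y hy
    rcases (arc_iff hn σ v y).1 hy with ⟨h, _⟩ | ⟨h, _⟩
    · rw [h1] at h; exact Bool.false_ne_true h
    · simp [h2] at h

lemma isSource_iff (hn : 3 ≤ n) (σ : Fin n → Bool) (v : Fin n) :
    IsSource (cycleArc n σ) v ↔ (σ v = true ∧ σ (v - 1) = false) := by
  constructor
  · intro h
    constructor
    · by_contra hc
      apply h (v + 1)
      apply (arc_iff hn σ (v+1) v).2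
      right
      rw [add_sub_cancel_right]
      exact ⟨by simpa using hc, rfl⟩
    · by_contra hc
      apply h (v - 1)
      apply (arc_iff hn σ (v-1) v).2
      left
      rw [sub_add_cancel]
      exact ⟨by simpa using hc, rfl⟩
  · rintro ⟨h1, h2⟩ y hy
    rcases (arc_iff hn σ y v).1 hy with ⟨h, hv⟩ | ⟨h, hv⟩
    · rw [(eq_succ_iff y v).1 hv] at h
      rw [h2] at h; exact Bool.false_ne_true h
    · have : y = v + 1 := by
        rw [hv, sub_add_cancel]
      subst this
      rw [add_sub_cancel_right] at h
      rw [h1] at h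
      simp at h

end CycleLemmas

section Comb
variable {n : ℕ} [NeZero n]

lemma card_src_eq_card_snk (σ : Fin n → Bool) :
    (Finset.univ.filter (fun v : Fin n => σ v = true ∧ σ (v - 1) = false)).card =
    (Finset.univ.filter (fun v : Fin n => σ v = false ∧ σ (v - 1) = true)).card := by
  classical
  set P := Finset.univ.filter (fun v : Fin n => σ v = true) with hP
  set Q := Finset.univ.filter (fun v : Fin n => σ (v - 1) = true) with hQ
  have hPQ : Q = P.image (· + 1) := by
    ext v
    simp only [hP, hQ, Finset.mem_filter, Finset.mem_univ, true_and, Finset.mem_image]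
    constructor
    · intro h; exact ⟨v - 1, h, sub_add_cancel v 1⟩
    · rintro ⟨a, ha, rfl⟩; rwa [add_sub_cancel_right]
  have hcard : Q.card = P.card := by
    rw [hPQ]
    exact Finset.card_image_of_injective _ (fun a b hab => by
      have : a + 1 - 1 = b + 1 - 1 := by rw [hab]
      simpa [add_sub_cancel_right] using this)
  have h1 := Finset.card_filter_add_card_filter_not
    (s := P) (p := fun v => σ (v - 1) = true)
  have h2 := Finset.card_filter_add_card_filter_not
    (s := Q) (p := fun v => σ v = true)
  have h3 : P.filter (fun v => σ (v - 1) = true) = Q.filter (fun v => σ v = true) := by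
    ext v
    simp only [hP, hQ, Finset.filter_filter, Finset.mem_filter, Finset.mem_univ, true_and]
    tauto
  have h4 : Finset.univ.filter (fun v : Fin n => σ v = true ∧ σ (v - 1) = false)
      = P.filter (fun v => ¬ (σ (v - 1) = true)) := by
    ext v
    simp [hP, Finset.filter_filter]
  have h5 : Finset.univ.filter (fun v : Fin n => σ v = false ∧ σ (v - 1) = true)
      = Q.filter (fun v => ¬ (σ v = true)) := by
    ext v
    simp [hQ, Finset.filter_filter]
    tauto
  rw [h4, h5]
  rw [h3] at h1
  omega

open Fin.NatCast in
lemma const_of_no_transition (σ : Fin n → Bool)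
    (hsnk : ∀ v, ¬ (σ v = false ∧ σ (v - 1) = true))
    (hsrc : ∀ v, ¬ (σ v = true ∧ σ (v - 1) = false)) :
    ∀ v, σ v = σ 0 := by
  have hstep : ∀ w : Fin n, σ (w + 1) = σ w := by
    intro w
    have h1 := hsnk (w + 1)
    have h2 := hsrc (w + 1)
    rw [add_sub_cancel_right] at h1 h2
    cases h : σ (w + 1) <;> cases h' : σ w <;> simp_all
  have hk : ∀ k : ℕ, σ (k : Fin n) = σ 0 := by
    intro k
    induction k with
    | zero => simp
    | succ m ih =>
      have : ((m + 1 : ℕ) : Fin n) = (m : Fin n) + 1 := by push_cast; ring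
      rw [this, hstep, ih]
  intro v
  have := hk (v : ℕ)
  rwa [Fin.cast_val_eq_self] at this

lemma exists_equiv_two {α : Type*} [DecidableEq α] (a b x y : α) (hab : a ≠ b) (hxy : x ≠ y) :
    ∃ f : Equiv.Perm α, f a = x ∧ f b = y := by
  classical
  set g1 := Equiv.swap a x with hg1
  have h1 : g1 a = x := Equiv.swap_apply_left a x
  refine ⟨g1.trans (Equiv.swap (g1 b) y), ?_, ?_⟩
  · simp only [Equiv.trans_apply, h1]
    apply Equiv.swap_apply_of_ne_of_ne
    · intro h
      exact hab (g1.injective (h1.trans h))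
    · exact hxy
  · simp only [Equiv.trans_apply]
    exact Equiv.swap_apply_left _ y

end Comb

section Main

variable {n : ℕ} [NeZero n]

lemma theta_inj (hn : 3 ≤ n) (σ : Fin n → Bool) (s t : Fin n)
    (hs : σ s = false ∧ σ (s - 1) = true)
    (ht : σ t = true ∧ σ (t - 1) = false)
    (hsnkuniq : ∀ v, σ v = false ∧ σ (v - 1) = true → v = s)
    (hsrcuniq : ∀ v, σ v = true ∧ σ (v - 1) = false → v = t)
    (hadj : t = s - 1 ∨ t = s + 1)
    (f : Fin n → ℕ) (hfinj : Function.Injective f)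
    (hflb : ∀ y, 1 ≤ f y) (hfub : ∀ y, f y ≤ n)
    (hft1 : f (t + 1) = n) (hft2 : f (t - 1) = n - 1) :
    Function.Injective (fun v => dWeight (cycleArc n σ) {1} f v) := by
  intro u v huv
  by_contra hne
  replace huv : dWeight (cycleArc n σ) {1} f u = dWeight (cycleArc n σ) {1} f v := huv
  rw [weight_eq hn, weight_eq hn] at huv
  have hgen : ∀ w : Fin n, w ≠ s → w ≠ t →
      (if σ w then f (w + 1) else 0) + (if σ (w - 1) then 0 else f (w - 1)) =
      f (if σ w then w + 1 else w - 1) := by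
    intro w hws hwt
    cases h : σ w
    · have h2 : σ (w - 1) = false := by
        cases h3 : σ (w - 1)
        · rfl
        · exact absurd (hsnkuniq w ⟨h, h3⟩) hws
      simp [h, h2]
    · have h2 : σ (w - 1) = true := by
        cases h3 : σ (w - 1)
        · exact absurd (hsrcuniq w ⟨h, h3⟩) hwt
        · rfl
      simp [h, h2]
  have hWs : ∀ w : Fin n, w = s →
      (if σ w then f (w + 1) else 0) + (if σ (w - 1) then 0 else f (w - 1)) = 0 := by
    rintro w rfl; simp [hs.1, hs.2]
  have hWt : ∀ w : Fin n, w = t →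
      (if σ w then f (w + 1) else 0) + (if σ (w - 1) then 0 else f (w - 1)) =
      f (t + 1) + f (t - 1) := by
    rintro w rfl; simp [ht.1, ht.2]
  have hkey : ∀ a b : Fin n, a ≠ s → a ≠ t → b ≠ s → b ≠ t →
      σ a = true → σ b = false → a + 1 = b - 1 → False := by
    intro a b has hat hbs hbt hσa hσb hab
    have hb1 : σ (b - 1) = false := by
      cases h3 : σ (b - 1)
      · rfl
      · exact absurd (hsnkuniq b ⟨hσb, h3⟩) hbs
    have hsnk : σ (a + 1) = false ∧ σ (a + 1 - 1) = true := by
      constructor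
      · rw [hab]; exact hb1
      · rw [add_sub_cancel_right]; exact hσa
    have heq : a + 1 = s := hsnkuniq _ hsnk
    have ha' : a = s - 1 := by rw [← heq, add_sub_cancel_right]
    have hb' : b = s + 1 := by rw [← sub_add_cancel b 1, ← hab, heq]
    rcases hadj with h | h
    · exact hat (ha'.trans h.symm)
    · exact hbt (hb'.trans h.symm)
  rcases eq_or_ne u s with hus | hus
  · rcases eq_or_ne v s with hvs | hvs
    · exact hne (hus.trans hvs.symm)
    · rcases eq_or_ne v t with hvt | hvt
      · rw [hWs u hus, hWt v hvt, hft1] at huv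
        omega
      · rw [hWs u hus, hgen v hvs hvt] at huv
        have := hflb (if σ v then v + 1 else v - 1)
        omega
  · rcases eq_or_ne u t with hut | hut
    · rcases eq_or_ne v s with hvs | hvs
      · rw [hWt u hut, hWs v hvs, hft1] at huv
        omega
      · rcases eq_or_ne v t with hvt | hvt
        · exact hne (hut.trans hvt.symm)
        · rw [hWt u hut, hgen v hvs hvt, hft1, hft2] at huv
          have := hfub (if σ v then v + 1 else v - 1)
          omega
    · rcases eq_or_ne v s with hvs | hvs
      · rw [hWs v hvs, hgen u hus hut] at huv
        have := hflb (if σ u then u + 1 else u - 1)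
        omega
      · rcases eq_or_ne v t with hvt | hvt
        · rw [hWt v hvt, hgen u hus hut, hft1, hft2] at huv
          have := hfub (if σ u then u + 1 else u - 1)
          omega
        · rw [hgen u hus hut, hgen v hvs hvt] at huv
          have hab := hfinj huv
          cases hσu : σ u <;> cases hσv : σ v <;> simp only [hσu, hσv] at hab <;>
            simp at hab
          · exact hne hab
          · exact hkey v u hvs hvt hus hut hσv hσu hab.symm
          · exact hkey u v hus hut hvs hvt hσu hσv hab
          · exact hne hab

end Main

/-- For `n ≥ 3`, an oriented cycle `C⃗_n` is `{1}`-antimagic iff it is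
unidirectional or Θ-oriented. -/
theorem one_antimagic_iff_uni_or_theta (n : ℕ) (hn : 3 ≤ n) (σ : Fin n → Bool) :
    DAntimagic (Fin n) (cycleArc n σ) {1} ↔
      Unidirectional n σ ∨ ThetaOriented (cycleArc n σ) := by
  haveI : NeZero n := ⟨by omega⟩
  constructor
  · rintro ⟨e, hinj⟩
    have hW : ∀ u v : Fin n,
        ((if σ u then ((e (u + 1) : ℕ) + 1) else 0) +
          (if σ (u - 1) then 0 else ((e (u - 1) : ℕ) + 1))) =
        ((if σ v then ((e (v + 1) : ℕ) + 1) else 0) +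
          (if σ (v - 1) then 0 else ((e (v - 1) : ℕ) + 1))) → u = v := by
      intro u v h
      apply hinj
      show dWeight (cycleArc n σ) {1} (fun y => (e y : ℕ) + 1) u
        = dWeight (cycleArc n σ) {1} (fun y => (e y : ℕ) + 1) v
      rw [weight_eq hn, weight_eq hn]
      exact h
    have hone : ∀ s1 s2 : Fin n, (σ s1 = false ∧ σ (s1 - 1) = true) →
        (σ s2 = false ∧ σ (s2 - 1) = true) → s1 = s2 := by
      intro s1 s2 h1 h2
      apply hW
      simp [h1.1, h1.2, h2.1, h2.2]
    by_cases hC : ∀ v, σ v = σ 0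
    · left
      cases h0 : σ 0
      · exact Or.inr (fun i => (hC i).trans h0)
      · exact Or.inl (fun i => (hC i).trans h0)
    · right
      have hex : (∃ v : Fin n, σ v = false ∧ σ (v - 1) = true) ∨
          (∃ v : Fin n, σ v = true ∧ σ (v - 1) = false) := by
        by_contra hcon
        rw [not_or] at hcon
        exact hC (const_of_no_transition σ (fun v h => hcon.1 ⟨v, h⟩)
          (fun v h => hcon.2 ⟨v, h⟩))
      have hsnk_ex : ∃ v : Fin n, σ v = false ∧ σ (v - 1) = true := by
        rcases hex with h | h
        · exact h
        · obtain ⟨v, hv⟩ := h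
          have hpos : 0 < (Finset.univ.filter
              (fun v : Fin n => σ v = true ∧ σ (v - 1) = false)).card :=
            Finset.card_pos.2 ⟨v, by simp [hv.1, hv.2]⟩
          rw [card_src_eq_card_snk σ] at hpos
          obtain ⟨w, hw⟩ := Finset.card_pos.1 hpos
          simp only [Finset.mem_filter, Finset.mem_univ, true_and] at hw
          exact ⟨w, hw⟩
      obtain ⟨s, hs⟩ := hsnk_ex
      have hsnkcard : (Finset.univ.filter
          (fun v : Fin n => σ v = false ∧ σ (v - 1) = true)).card ≤ 1 := by
        rw [Finset.card_le_one]
        intro a ha b hb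
        simp only [Finset.mem_filter, Finset.mem_univ, true_and] at ha hb
        exact hone a b ha hb
      have hsrccard : (Finset.univ.filter
          (fun v : Fin n => σ v = true ∧ σ (v - 1) = false)).card ≤ 1 :=
        le_of_eq_of_le (card_src_eq_card_snk σ) hsnkcard
      have hsrc_ex : ∃ v : Fin n, σ v = true ∧ σ (v - 1) = false := by
        have hpos : 0 < (Finset.univ.filter
            (fun v : Fin n => σ v = false ∧ σ (v - 1) = true)).card :=
          Finset.card_pos.2 ⟨s, by simp [hs.1, hs.2]⟩
        rw [← card_src_eq_card_snk σ] at hpos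
        obtain ⟨w, hw⟩ := Finset.card_pos.1 hpos
        simp only [Finset.mem_filter, Finset.mem_univ, true_and] at hw
        exact ⟨w, hw⟩
      obtain ⟨t, ht⟩ := hsrc_ex
      have hsrcuniq : ∀ v : Fin n, (σ v = true ∧ σ (v - 1) = false) → v = t := by
        intro v hv
        exact Finset.card_le_one.1 hsrccard v (by simp [hv.1, hv.2]) t (by simp [ht.1, ht.2])
      have hadj : t = s + 1 ∨ t = s - 1 := by
        by_contra hcon
        rw [not_or] at hcon
        have h1 : σ (s + 1) = false := by
          cases h : σ (s + 1)
          · rfl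
          · refine absurd (hsrcuniq (s + 1) ⟨h, ?_⟩).symm hcon.1
            rw [add_sub_cancel_right]; exact hs.1
        have h2 : σ (s - 1 - 1) = true := by
          cases h : σ (s - 1 - 1)
          · exact absurd (hsrcuniq (s - 1) ⟨hs.2, h⟩).symm hcon.2
          · rfl
        have heq := hW (s - 1) (s + 1) ?_
        · exact fin_succ_ne_pred hn s heq.symm
        · rw [sub_add_cancel, add_sub_cancel_right]
          simp [hs.1, hs.2, h1, h2]
      refine ⟨s, t, (isSink_iff hn σ s).2 hs, (isSource_iff hn σ t).2 ht, ?_, ?_, ?_⟩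
      · intro u hu; exact hone u s ((isSink_iff hn σ u).1 hu) hs
      · intro u hu; exact hsrcuniq u ((isSource_iff hn σ u).1 hu)
      · apply (arc_iff hn σ t s).2
        rcases hadj with h | h
        · right
          refine ⟨?_, ?_⟩
          · rw [h, add_sub_cancel_right]; exact hs.1
          · rw [h, add_sub_cancel_right]
        · left
          refine ⟨ht.1, ?_⟩
          rw [h, sub_add_cancel]
  · rintro (huni | htheta)
    · refine ⟨finCongr (Fintype.card_fin n).symm, ?_⟩
      intro u v huv
      replace huv : dWeight (cycleArc n σ) {1} (fun y : Fin n => (y : ℕ) + 1) u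
          = dWeight (cycleArc n σ) {1} (fun y : Fin n => (y : ℕ) + 1) v := huv
      rw [weight_eq hn, weight_eq hn] at huv
      rcases huni with hT | hF
      · simp [hT u, hT v, hT (u - 1), hT (v - 1)] at huv
        have h1 : u + 1 = v + 1 := by
          apply Fin.ext
          omega
        have := congrArg (· - 1) h1
        simpa [add_sub_cancel_right] using this
      · simp [hF u, hF v, hF (u - 1), hF (v - 1)] at huv
        have h1 : u - 1 = v - 1 := by
          apply Fin.ext
          omega
        have := congrArg (· + 1) h1
        simpa [sub_add_cancel] using this
    · obtain ⟨s, t, hsink, hsource, husink, husource, hts⟩ := htheta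
      have hs := (isSink_iff hn σ s).1 hsink
      have ht := (isSource_iff hn σ t).1 hsource
      have hadj : t = s - 1 ∨ t = s + 1 := by
        rcases (arc_iff hn σ t s).1 hts with ⟨_, h⟩ | ⟨_, h⟩
        · left; rw [h, add_sub_cancel_right]
        · right; rw [h, sub_add_cancel]
      obtain ⟨e0, he1, he2⟩ := exists_equiv_two (t + 1) (t - 1)
        (⟨n - 1, by omega⟩ : Fin n) (⟨n - 2, by omega⟩ : Fin n)
        (fin_succ_ne_pred hn t)
        (by intro h; rw [Fin.ext_iff] at h; simp at h; omega)
      refine ⟨e0.trans (finCongr (Fintype.card_fin n).symm), ?_⟩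
      have happ : ∀ y : Fin n,
          (((e0.trans (finCongr (Fintype.card_fin n).symm)) y : ℕ)) = (e0 y : ℕ) := by
        intro y; simp [finCongr_apply]
      refine theta_inj hn σ s t hs ht
        (fun v h => husink v ((isSink_iff hn σ v).2 h))
        (fun v h => husource v ((isSource_iff hn σ v).2 h))
        hadj _ ?_ ?_ ?_ ?_ ?_
      · intro a b hab
        exact (e0.trans (finCongr (Fintype.card_fin n).symm)).injective
          (Fin.val_injective (Nat.succ_injective hab))
      · intro y
        exact Nat.succ_le_succ (Nat.zero_le _)
      · intro y
        have h : ((e0.trans (finCongr (Fintype.card_fin n).symm)) y : ℕ) < n := by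
          simpa using ((e0.trans (finCongr (Fintype.card_fin n).symm)) y).isLt
        show _ + 1 ≤ n
        omega
      · show ((e0.trans (finCongr (Fintype.card_fin n).symm)) (t + 1) : ℕ) + 1 = n
        rw [happ, he1]
        show n - 1 + 1 = n
        omega
      · show ((e0.trans (finCongr (Fintype.card_fin n).symm)) (t - 1) : ℕ) + 1 = n - 1
        rw [happ, he2]
        show n - 2 + 1 = n - 1
        omega
end

section
/- For every n ≥ 3 with n ≠ 4, the unidirectional oriented cycle C⃗_n is {0,2}-antimagic. -/
open scoped Classical

/-!
The `{0, 2}`-weight of `v` in `C⃗_n` is `L v + L (v + 2)`, so it suffices to number `ℤ/n` by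
`1, …, n` with pairwise distinct sums `L v + L (v + 2)`. Along the cycle `ℤ/m` with step `1`,
`cycleLabel m` is such a numbering whenever `m ≠ 2`. For odd `n = 2m + 1`, multiplication by
`m + 1 = 2⁻¹` turns the step `2` into the step `1`. For even `n = 2m`, the step `2` preserves
parity and acts as the step `1` on `v / 2`; labelling even vertices by `cycleLabel m` and odd ones
by `cycleLabel m + m` puts their sums in the disjoint ranges `[2, 2m]` and `[2m + 2, 4m]`.
-/

open Function Set

theorem dAntimagic_of_labeling {V : Type*} [Fintype V] {A : V → V → Prop} {D : Set ℕ}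
    (L : V → ℕ) (hL : Injective L) (hmem : ∀ v, L v ∈ Icc 1 (Fintype.card V))
    (hw : Injective (dWeight A D L)) : DAntimagic V A D := by
  have hpos (v : V) : 1 ≤ L v := (hmem v).1
  have hle (v : V) : L v ≤ Fintype.card V := (hmem v).2
  let e (v : V) : Fin (Fintype.card V) := ⟨L v - 1, by have := hpos v; have := hle v; omega⟩
  have hinj : Injective e := fun v w h => hL <| by
    have := hpos v
    have := hpos w
    simp only [e, Fin.mk.injEq] at h
    omega
  have he : Bijective e := (Fintype.bijective_iff_injective_and_card e).mpr ⟨hinj, by simp⟩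
  refine ⟨Equiv.ofBijective e he, ?_⟩
  convert hw using 3
  exact Nat.sub_add_cancel (hpos _)

theorem Nat.mod_eq_ite_of_lt_two_mul {a n : ℕ} (h : a < 2 * n) :
    a % n = if a < n then a else a - n := by
  split_ifs with ha
  · exact Nat.mod_eq_of_lt ha
  · rw [Nat.mod_eq_sub_mod (not_lt.mp ha), Nat.mod_eq_of_lt (by omega)]

theorem Fin.val_add_two {n : ℕ} [NeZero n] (v : Fin n) :
    ((v + 2 : Fin n) : ℕ) = (v + 2) % n := by
  simp [Fin.val_add]

section UniCycle

variable {n : ℕ}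

theorem walkLen_uniArc_iff (k : ℕ) (u v : Fin n) :
    WalkLen (uniArc n) k u v ↔ (v : ℕ) = (u + k) % n := by
  induction k generalizing u with
  | zero => simp [WalkLen, Fin.ext_iff, Nat.mod_eq_of_lt u.isLt, eq_comm]
  | succ k ih =>
    simp only [WalkLen, uniArc, ih]
    constructor
    · rintro ⟨w, hw, hwv⟩
      rw [hwv, hw, Nat.mod_add_mod, add_assoc, add_comm 1]
    · intro h
      refine ⟨⟨(u + 1) % n, Nat.mod_lt _ u.pos⟩, rfl, ?_⟩
      rw [h, Nat.mod_add_mod, add_assoc, add_comm 1]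

theorem hasDist_uniArc_iff {k : ℕ} (hk : k < n) (u v : Fin n) :
    HasDist (uniArc n) u v k ↔ (v : ℕ) = (u + k) % n := by
  simp only [HasDist, walkLen_uniArc_iff]
  refine ⟨And.left, fun h => ⟨h, fun m hm hwalk => hm.ne ?_⟩⟩
  exact (Nat.ModEq.add_left_cancel' u (hwalk.symm.trans h)).eq_of_lt_of_lt (by omega) hk

theorem inDNbhd_uniArc_zero_two_iff (hn : 3 ≤ n) (v y : Fin n) :
    InDNbhd (uniArc n) {0, 2} v y ↔ y = v ∨ (y : ℕ) = (v + 2) % n := by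
  simp only [InDNbhd, mem_insert_iff, mem_singleton_iff, exists_eq_or_imp, exists_eq_left,
    hasDist_uniArc_iff (by omega : 0 < n), hasDist_uniArc_iff (by omega : 2 < n)]
  simp [Fin.ext_iff, Nat.mod_eq_of_lt v.isLt]

theorem dWeight_uniArc_zero_two [NeZero n] (hn : 3 ≤ n) (f : Fin n → ℕ) (v : Fin n) :
    dWeight (uniArc n) {0, 2} f v = f v + f (v + 2) := by
  have hv : v ≠ v + 2 := by
    simp [Fin.ext_iff, Nat.mod_eq_of_lt (show 2 < n by omega)]
  have hnbhd (y : Fin n) :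
      InDNbhd (uniArc n) {0, 2} v y ↔ y ∈ ({v, v + 2} : Finset (Fin n)) := by
    simp [inDNbhd_uniArc_zero_two_iff hn, Fin.ext_iff (b := v + 2), Fin.val_add_two]
  simp only [dWeight, hnbhd, Finset.sum_ite_mem, Finset.univ_inter, Finset.sum_pair hv]

end UniCycle

def IsShiftAntimagicLabeling (n : ℕ) [NeZero n] (k : Fin n) (L : Fin n → ℕ) : Prop :=
  Injective L ∧ (∀ v, L v ∈ Icc 1 n) ∧ Injective fun v => L v + L (v + k)

/-- On the cycle `ℤ/m`, the labels `j + 1` have consecutive sums `2j + 3` for `j < m - 1` and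
`m + 1` for `j = m - 1`. These collide exactly when `m` is even, and then swapping the labels of
`0` and `1` turns the sums into `3, 4, 7, 9, …, 2m - 1` and `m + 2`. -/
def cycleLabel (m j : ℕ) : ℕ :=
  if m % 2 = 0 ∧ j ≤ 1 then 2 - j else j + 1

theorem cycleLabel_mem_Icc {m j : ℕ} (hj : j < m) : cycleLabel m j ∈ Icc 1 m := by
  unfold cycleLabel
  split_ifs <;> simp only [mem_Icc] <;> omega

theorem cycleLabel_injective (m : ℕ) : Injective (cycleLabel m) := by
  intro j j' h
  unfold cycleLabel at h
  split_ifs at h <;> omega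

theorem cycleLabel_add_succ_injOn {m : ℕ} (hm : m ≠ 2) :
    InjOn (fun j => cycleLabel m j + cycleLabel m ((j + 1) % m)) (Iio m) := by
  intro j (hj : j < m) j' (hj' : j' < m) h
  simp only [Nat.mod_eq_ite_of_lt_two_mul (show j + 1 < 2 * m by omega),
    Nat.mod_eq_ite_of_lt_two_mul (show j' + 1 < 2 * m by omega)] at h
  unfold cycleLabel at h
  split_ifs at h <;> omega

section OddCycle

variable {n m : ℕ} [NeZero n]

theorem isShiftAntimagicLabeling_odd (hn : n = 2 * m + 1) :
    IsShiftAntimagicLabeling n 2 fun v => cycleLabel n ((m + 1) * v % n) := by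
  have hinj : Injective fun v : Fin n => (m + 1) * v % n := by
    intro v v' (h : (m + 1) * v ≡ (m + 1) * v' [MOD n])
    have h2 := h.mul_left 2
    rw [← mul_assoc, ← mul_assoc, show 2 * (m + 1) = n + 1 by omega, add_one_mul,
      add_one_mul] at h2
    exact Fin.ext (Nat.ModEq.eq_of_lt_of_lt (by simpa [Nat.ModEq] using h2) v.isLt v'.isLt)
  have hstep (v : Fin n) : (m + 1) * (v + 2 : Fin n) % n = ((m + 1) * v % n + 1) % n := calc
    _ = (m + 1) * ((v + 2) % n) % n := by rw [Fin.val_add_two]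
    _ = (m + 1) * (v + 2) % n := (Nat.mod_modEq _ _).mul_left _
    _ = ((m + 1) * v + 1 + n) % n := by
      rw [mul_add, show (m + 1) * 2 = n + 1 by omega, add_comm n 1, ← add_assoc]
    _ = ((m + 1) * v + 1) % n := Nat.add_mod_right _ _
    _ = ((m + 1) * v % n + 1) % n := (Nat.mod_modEq _ _).symm.add_right 1
  have hlt (v : Fin n) : (m + 1) * v % n < n := Nat.mod_lt _ v.pos
  refine ⟨(cycleLabel_injective n).comp hinj, fun v => cycleLabel_mem_Icc (hlt v),
    fun v v' h => hinj ?_⟩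
  simp only [hstep] at h
  exact cycleLabel_add_succ_injOn (by omega) (hlt v) (hlt v') h

end OddCycle

section EvenCycle

variable {n m : ℕ} [NeZero n]

theorem Fin.val_add_two_mod_two (hn : n = 2 * m) (v : Fin n) :
    ((v + 2 : Fin n) : ℕ) % 2 = v % 2 := by
  rw [Fin.val_add_two, Nat.mod_mod_of_dvd _ ⟨m, hn⟩, Nat.add_mod_right]

theorem Fin.val_add_two_div_two (hn : n = 2 * m) (v : Fin n) :
    ((v + 2 : Fin n) : ℕ) / 2 = (v / 2 + 1) % m := by
  have hv := v.isLt
  rw [Fin.val_add_two, Nat.mod_eq_ite_of_lt_two_mul (by omega : (v : ℕ) + 2 < 2 * n),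
    Nat.mod_eq_ite_of_lt_two_mul (by omega : (v : ℕ) / 2 + 1 < 2 * m)]
  split_ifs <;> omega

theorem isShiftAntimagicLabeling_even (hn : n = 2 * m) (hm : m ≠ 2) :
    IsShiftAntimagicLabeling n 2 fun v =>
      cycleLabel m (v / 2) + if (v : ℕ) % 2 = 0 then 0 else m := by
  have hlt (v : Fin n) : (v : ℕ) / 2 < m := by omega
  have hlab (v : Fin n) : 1 ≤ cycleLabel m (v / 2) ∧ cycleLabel m (v / 2) ≤ m :=
    cycleLabel_mem_Icc (hlt v)
  have hsum (v : Fin n) : 2 ≤ cycleLabel m (v / 2) + cycleLabel m ((v / 2 + 1) % m) ∧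
      cycleLabel m (v / 2) + cycleLabel m ((v / 2 + 1) % m) ≤ 2 * m := by
    have := hlab v
    have := cycleLabel_mem_Icc (Nat.mod_lt (v / 2 + 1) (show 0 < m by omega))
    simp only [mem_Icc] at this
    omega
  refine ⟨fun v v' h => ?_, fun v => ?_, fun v v' h => ?_⟩
  · dsimp only at h
    have := hlab v
    have := hlab v'
    have hq := cycleLabel_injective m (show cycleLabel m (v / 2) = cycleLabel m (v' / 2) by
      split_ifs at h <;> omega)
    exact Fin.ext (by split_ifs at h <;> omega)
  · have := hlab v
    simp only [mem_Icc]
    split_ifs <;> omega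
  · simp only [Fin.val_add_two_div_two hn, Fin.val_add_two_mod_two hn] at h
    have := hsum v
    have := hsum v'
    have hS : cycleLabel m (v / 2) + cycleLabel m ((v / 2 + 1) % m) =
        cycleLabel m (v' / 2) + cycleLabel m ((v' / 2 + 1) % m) := by
      split_ifs at h <;> omega
    have hq := cycleLabel_add_succ_injOn hm (hlt v) (hlt v') hS
    exact Fin.ext (by split_ifs at h <;> omega)

end EvenCycle

/-- For every `n ≥ 3` with `n ≠ 4`, the unidirectional `C⃗_n` is
`{0,2}`-antimagic. -/
theorem uni_antimagic_zero_two (n : ℕ) (hn : 3 ≤ n) (hne : n ≠ 4) :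
    DAntimagic (Fin n) (uniArc n) {0, 2} := by
  have : NeZero n := ⟨by omega⟩
  obtain ⟨L, hinj, hmem, hw⟩ : ∃ L : Fin n → ℕ, IsShiftAntimagicLabeling n 2 L := by
    rcases Nat.even_or_odd' n with ⟨m, hm | hm⟩
    · exact ⟨_, isShiftAntimagicLabeling_even hm (by omega)⟩
    · exact ⟨_, isShiftAntimagicLabeling_odd hm⟩
  refine dAntimagic_of_labeling L hinj (by simpa using hmem) ?_
  simpa only [Injective, dWeight_uniArc_zero_two hn] using hw
end
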